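/- arXiv:math-ph/0508005 — 6 statements merged into one kernel-verified Lean document; each statement's English description precedes it below -/
import Mathlib

section
/- Let A be a bounded normal operator on a complex Hilbert space H and B a d×d complex matrix (d ≥ 1). Then the spectrum of the operator T realizing A⊗1 + 1⊗B on the d-fold Hilbert direct sum H^d equals the Minkowski sum σ(A) + σ(B), i.e. σ(T) = {a + b : a ∈ σ(A), b ∈ σ(B)}. -/
/-!
For `σ(T) ⊆ σ(A) + σ(B)`, view operators on `H^d` as `d × d` matrices over `End H`. There
`T = X + Y` with `X = A ⊗ 1` and `Y = 1 ⊗ B` commuting, and `p(Y) = 0` for the characteristic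
polynomial `p` of `B` (Cayley–Hamilton). Writing `X' = z - X`, we get `p(X') = (z - T) q` with `q`
commuting with `z - T`, so if `z - T` is not invertible neither is `p(X')`, and the spectral
mapping theorem yields a root `b` of `p` with `z - b ∈ σ(A)`.

For `σ(A) + σ(B) ⊆ σ(T)`, take a unit eigenvector `B v = b v`. Then `x ↦ v ⊗ x` is an isometry
intertwining `a + b - T` with `a - A`, so if `a + b - T` were invertible, `a - A` would be bounded
below; a normal operator that is bounded below is invertible, since the orthogonal complement of
its range is its kernel.
-/

open scoped Pointwise NNReal ENNReal Matrix
open Polynomial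

open scoped IsMulCommutative in
theorem Commute.exists_aeval_sub_aeval_eq_mul {𝕜 R : Type*} [CommRing 𝕜] [Ring R] [Algebra 𝕜 R]
    {x y : R} (hxy : Commute x y) (p : 𝕜[X]) :
    ∃ q, Commute (x - y) q ∧ aeval x p - aeval y p = (x - y) * q := by
  have := Algebra.isMulCommutative_adjoin 𝕜 (s := {x, y}) <| by
    rintro a (rfl | rfl) b (rfl | rfl) <;> first | rfl | exact hxy.eq | exact hxy.eq.symm
  let x' : Algebra.adjoin 𝕜 {x, y} := ⟨x, Algebra.subset_adjoin (by simp)⟩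
  let y' : Algebra.adjoin 𝕜 {x, y} := ⟨y, Algebra.subset_adjoin (by simp)⟩
  obtain ⟨q, hq⟩ := sub_dvd_eval_sub x' y' (p.map (algebraMap 𝕜 _))
  refine ⟨q, congrArg Subtype.val (mul_comm (x' - y') q), ?_⟩
  simpa [eval_map_algebraMap, aeval_subalgebra_coe] using congrArg Subtype.val hq

theorem Commute.spectrum_add_subset_of_aeval_eq_zero {𝕜 R : Type*} [Field 𝕜] [IsAlgClosed 𝕜]
    [Ring R] [Algebra 𝕜 R] {x y : R} (hxy : Commute x y) {p : 𝕜[X]} (hp : p ≠ 0)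
    (hy : aeval y p = 0) :
    spectrum 𝕜 (x + y) ⊆ spectrum 𝕜 x + {r | p.IsRoot r} := by
  intro z hz
  obtain ⟨q, hq, hpq⟩ :=
    ((Algebra.commute_algebraMap_left z y).sub_left hxy).exists_aeval_sub_aeval_eq_mul p
  rw [hy, sub_zero] at hpq
  have hp_not_unit : ¬IsUnit (aeval (algebraMap 𝕜 R z - x) p) := by
    rw [hpq, hq.isUnit_mul_iff, sub_sub]
    exact fun h ↦ hz h.1
  rcases le_or_gt p.degree 0 with hdeg | hdeg
  · rw [eq_C_of_degree_le_zero hdeg, aeval_C] at hp_not_unit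
    refine absurd ((isUnit_iff_ne_zero.mpr fun h ↦ hp ?_).map (algebraMap 𝕜 R)) hp_not_unit
    rw [eq_C_of_degree_le_zero hdeg, h, C_0]
  · rw [← spectrum.zero_mem_iff 𝕜, spectrum.map_polynomial_aeval_of_degree_pos _ _ hdeg,
      ← spectrum.singleton_sub_eq] at hp_not_unit
    obtain ⟨_, ⟨_, rfl, a, ha, rfl⟩, hroot⟩ := hp_not_unit
    exact ⟨a, ha, _, hroot, add_sub_cancel a _⟩

theorem Matrix.spectrum_scalar_add_map_algebraMap_subset {n 𝕜 R : Type*} [Fintype n]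
    [DecidableEq n] [Field 𝕜] [IsAlgClosed 𝕜] [Ring R] [Algebra 𝕜 R] (a : R)
    (B : Matrix n n 𝕜) :
    spectrum 𝕜 (scalar n a + B.map (algebraMap 𝕜 R)) ⊆ spectrum 𝕜 a + spectrum 𝕜 B := by
  have hcomm : Commute (scalar n a) (B.map (algebraMap 𝕜 R)) := by
    ext i j
    simp [Algebra.commutes]
  have hCH : aeval (B.map (algebraMap 𝕜 R)) B.charpoly = 0 := by
    have := aeval_algHom_apply (Algebra.ofId 𝕜 R).mapMatrix B B.charpoly
    rwa [aeval_self_charpoly, map_zero] at this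
  refine (hcomm.spectrum_add_subset_of_aeval_eq_zero B.charpoly_monic.ne_zero hCH).trans ?_
  gcongr
  · exact AlgHom.spectrum_apply_subset (scalarAlgHom n 𝕜) a
  · exact fun r hr ↦ mem_spectrum_iff_isRoot_charpoly.mpr hr

theorem PiLp.spectrum_subset_of_apply_eq_add_sum_smul {𝕜 E ι : Type*}
    [NontriviallyNormedField 𝕜] [IsAlgClosed 𝕜] [NormedAddCommGroup E] [NormedSpace 𝕜 E]
    [CompleteSpace E] [Fintype ι] [DecidableEq ι] {p : ℝ≥0∞} [Fact (1 ≤ p)] (A : E →L[𝕜] E)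
    (B : Matrix ι ι 𝕜) (T : PiLp p (fun _ : ι => E) →L[𝕜] PiLp p (fun _ : ι => E))
    (hT : ∀ x i, T x i = A (x i) + ∑ j, B i j • x j) :
    spectrum 𝕜 T ⊆ spectrum 𝕜 A + spectrum 𝕜 B := by
  have hmatrix : endVecAlgEquivMatrixEnd ι 𝕜 𝕜 E
      ((WithLp.linearEquiv p 𝕜 (ι → E)).conjAlgEquiv 𝕜 T) =
        Matrix.scalar ι (A : Module.End 𝕜 E) + B.map (algebraMap 𝕜 _) := by
    ext i j x
    by_cases hij : i = j <;> simp [hT, hij]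
  calc spectrum 𝕜 T = spectrum 𝕜 (endVecAlgEquivMatrixEnd ι 𝕜 𝕜 E
        ((WithLp.linearEquiv p 𝕜 (ι → E)).conjAlgEquiv 𝕜 T)) := by
        rw [ContinuousLinearMap.spectrum_eq, AlgEquiv.spectrum_eq, AlgEquiv.spectrum_eq]
    _ ⊆ spectrum 𝕜 A + spectrum 𝕜 B := by
      rw [hmatrix, ContinuousLinearMap.spectrum_eq]
      exact Matrix.spectrum_scalar_add_map_algebraMap_subset _ B

theorem IsStarNormal.algebraMap_sub {𝕜 R : Type*} [CommSemiring 𝕜] [StarRing 𝕜] [Ring R]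
    [StarRing R] [Algebra 𝕜 R] [StarModule 𝕜 R] (r : 𝕜) {a : R} (ha : IsStarNormal a) :
    IsStarNormal (algebraMap 𝕜 R r - a) := by
  refine ⟨?_⟩
  rw [star_sub, ← algebraMap_star_comm]
  exact (Algebra.commute_algebraMap_left _ _).sub_left
    ((Algebra.commute_algebraMap_right _ _).sub_right ha.star_comm_self)

theorem ContinuousLinearMap.IsStarNormal.isUnit_of_antilipschitz {𝕜 E : Type*} [RCLike 𝕜]
    [NormedAddCommGroup E] [InnerProductSpace 𝕜 E] [CompleteSpace E] {N : E →L[𝕜] E}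
    (hN : IsStarNormal N) {K : ℝ≥0} (hK : AntilipschitzWith K N) : IsUnit N := by
  rw [isUnit_iff_bijective, bijective_iff_dense_range_and_antilipschitz]
  refine ⟨?_, K, hK⟩
  rw [Submodule.topologicalClosure_eq_top_iff, IsStarNormal.orthogonal_range hN]
  exact LinearMap.ker_eq_bot.mpr hK.injective

theorem Matrix.exists_norm_eq_one_mulVec_eq_smul {𝕜 ι : Type*} [RCLike 𝕜] [Fintype ι]
    [DecidableEq ι] {B : Matrix ι ι 𝕜} {b : 𝕜} (hb : b ∈ spectrum 𝕜 B) :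
    ∃ v : EuclideanSpace 𝕜 ι, ‖v‖ = 1 ∧ B *ᵥ v.ofLp = b • v.ofLp := by
  rw [← Matrix.spectrum_toLin', ← Module.End.hasEigenvalue_iff_mem_spectrum] at hb
  obtain ⟨w, hw⟩ := hb.exists_hasEigenvector
  refine ⟨‖WithLp.toLp 2 w‖⁻¹ • WithLp.toLp 2 w, norm_smul_inv_norm (by simpa using hw.2), ?_⟩
  simpa [Matrix.mulVec_smul, smul_comm b] using congrArg (‖WithLp.toLp 2 w‖⁻¹ • ·) hw.apply_eq_smul

section TensorVector

variable {𝕜 ι E : Type*} [RCLike 𝕜] [Fintype ι] [NormedAddCommGroup E] [NormedSpace 𝕜 E]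

theorem EuclideanSpace.norm_toLp_smul (v : EuclideanSpace 𝕜 ι) (x : E) :
    ‖(WithLp.toLp 2 fun i => v i • x : PiLp 2 fun _ : ι => E)‖ = ‖v‖ * ‖x‖ := by
  rw [PiLp.norm_eq_of_L2, EuclideanSpace.norm_eq, ← Real.sqrt_sq (norm_nonneg x),
    ← Real.sqrt_mul (by positivity)]
  simp [norm_smul, mul_pow, Finset.sum_mul]

theorem EuclideanSpace.isometry_toLp_smul {v : EuclideanSpace 𝕜 ι} (hv : ‖v‖ = 1) :
    Isometry fun x : E => (WithLp.toLp 2 fun i => v i • x : PiLp 2 fun _ : ι => E) := by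
  refine Isometry.of_dist_eq fun x y => ?_
  calc _ = ‖(WithLp.toLp 2 fun i => v i • (x - y) : PiLp 2 fun _ : ι => E)‖ := by
        rw [dist_eq_norm]; congr 1; ext; simp [smul_sub]
    _ = dist x y := by rw [norm_toLp_smul, hv, one_mul, dist_eq_norm]

end TensorVector

theorem PiLp.add_mem_spectrum_of_apply_eq_add_sum_smul {𝕜 H ι : Type*} [RCLike 𝕜]
    [NormedAddCommGroup H] [InnerProductSpace 𝕜 H] [CompleteSpace H] [Fintype ι] [DecidableEq ι]
    {A : H →L[𝕜] H} (hA : IsStarNormal A) (B : Matrix ι ι 𝕜)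
    (T : PiLp 2 (fun _ : ι => H) →L[𝕜] PiLp 2 (fun _ : ι => H))
    (hT : ∀ x i, T x i = A (x i) + ∑ j, B i j • x j) {a b : 𝕜} (ha : a ∈ spectrum 𝕜 A)
    (hb : b ∈ spectrum 𝕜 B) : a + b ∈ spectrum 𝕜 T := by
  obtain ⟨v, hv, hBv⟩ := Matrix.exists_norm_eq_one_mulVec_eq_smul hb
  set embed : H → PiLp 2 (fun _ : ι => H) := fun x => WithLp.toLp 2 fun i => v i • x
  have hembed : Isometry embed := EuclideanSpace.isometry_toLp_smul hv
  have hintertwine :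
      (algebraMap 𝕜 (PiLp 2 (fun _ : ι => H) →L[𝕜] PiLp 2 (fun _ : ι => H)) (a + b) - T) ∘ embed =
        embed ∘ (algebraMap 𝕜 (H →L[𝕜] H) a - A) := by
    funext x
    ext i
    have hBvi := congrFun hBv i
    simp only [Matrix.mulVec, dotProduct, Pi.smul_apply, smul_eq_mul] at hBvi
    simp [embed, hT, smul_smul, ← Finset.sum_smul, hBvi, smul_sub, mul_comm]
  rw [spectrum.mem_iff] at ha ⊢
  intro hS
  obtain ⟨K, hK⟩ := ((ContinuousLinearMap.bijective_iff_dense_range_and_antilipschitz _).mp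
    (ContinuousLinearMap.isUnit_iff_bijective.mp hS)).2
  have hcomp := hK.comp hembed.antilipschitz
  rw [hintertwine] at hcomp
  refine ha (ContinuousLinearMap.IsStarNormal.isUnit_of_antilipschitz (hA.algebraMap_sub a)
    (K := K * 1) fun x y => ?_)
  simpa [hembed.edist_eq] using hcomp x y

theorem spectrum_tensor_sum_normal_general
    {H : Type*} [NormedAddCommGroup H] [InnerProductSpace ℂ H] [CompleteSpace H]
    (A : H →L[ℂ] H) (hA : IsStarNormal A)
    (d : ℕ) (B : Matrix (Fin d) (Fin d) ℂ)
    (T : PiLp 2 (fun _ : Fin d => H) →L[ℂ] PiLp 2 (fun _ : Fin d => H))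
    (hT : ∀ (x : PiLp 2 (fun _ : Fin d => H)) (i : Fin d),
      T x i = A (x i) + ∑ j, B i j • x j) :
    spectrum ℂ T = spectrum ℂ A + spectrum ℂ B := by
  refine (PiLp.spectrum_subset_of_apply_eq_add_sum_smul A B T hT).antisymm ?_
  rintro _ ⟨a, ha, b, hb, rfl⟩
  exact PiLp.add_mem_spectrum_of_apply_eq_add_sum_smul hA B T hT ha hb

/-- **Tensor-spectrum lemma, part (i).**
If `A` is a bounded normal operator on a complex Hilbert space `H` and `B` is a
`d × d` complex matrix (`d ≥ 1`), then the spectrum of the operator `T`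
realizing `A ⊗ 1 + 1 ⊗ B` on the `d`-fold Hilbert direct sum `H^d` equals the
Minkowski sum `σ(A) + σ(B)`. -/
theorem spectrum_tensor_sum_normal
    {H : Type*} [NormedAddCommGroup H] [InnerProductSpace ℂ H] [CompleteSpace H]
    (A : H →L[ℂ] H) (hA : IsStarNormal A)
    (d : ℕ) (hd : 1 ≤ d) (B : Matrix (Fin d) (Fin d) ℂ)
    (T : PiLp 2 (fun _ : Fin d => H) →L[ℂ] PiLp 2 (fun _ : Fin d => H))
    (hT : ∀ (x : PiLp 2 (fun _ : Fin d => H)) (i : Fin d),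
      T x i = A (x i) + ∑ j, B i j • x j) :
    spectrum ℂ T = spectrum ℂ A + spectrum ℂ B :=
  spectrum_tensor_sum_normal_general A hA d B T hT
end

section
/- Let A be a bounded normal operator on a complex Hilbert space H and B a diagonalizable d×d complex matrix (ℂ^d has a basis of eigenvectors of B). Then there exists a constant C > 0 such that for every z ∈ ℂ not in σ(A) + σ(B), the operator T − z (where T realizes A⊗1 + 1⊗B on H^d) is invertible and ‖(T − z)⁻¹‖ ≤ C / dist(z, σ(A) + σ(B)). -/
/-!
Let `V` be the matrix whose columns form an eigenbasis of `B`, with eigenvalues `μⱼ`. Acting on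
`H^d`, `V` conjugates `T - z` into the block-diagonal operator with blocks `A - (z - μⱼ)`. Each
block is normal, so the norm of its inverse equals the spectral radius of that inverse,
`1 / dist(z - μⱼ, σ(A)) ≤ 1 / dist(z, σ(A) + σ(B))`; hence `C = ‖V‖ ‖V⁻¹‖ + 1` works.
-/

open scoped Pointwise

theorem Ring.inverse_units_mul_mul_inv {M₀ : Type*} [MonoidWithZero M₀] (u : M₀ˣ) (x : M₀) :
    Ring.inverse (↑u * x * ↑u⁻¹) = ↑u * Ring.inverse x * ↑u⁻¹ := by
  by_cases hx : IsUnit x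
  · obtain ⟨w, rfl⟩ := hx
    rw [← Units.val_mul, ← Units.val_mul, Ring.inverse_unit, Ring.inverse_unit]
    simp [mul_assoc]
  · have hconj : ¬IsUnit (↑u * x * ↑u⁻¹) := by
      rwa [Units.isUnit_mul_units, Units.isUnit_units_mul]
    simp [Ring.inverse_non_unit _ hx, Ring.inverse_non_unit _ hconj]

theorem norm_ringInverse_units_mul_mul_inv_le {R : Type*} [SeminormedRing R] (u : Rˣ) (x : R) :
    ‖Ring.inverse (↑u * x * ↑u⁻¹)‖ ≤ ‖(u : R)‖ * ‖(↑u⁻¹ : R)‖ * ‖Ring.inverse x‖ := by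
  rw [Ring.inverse_units_mul_mul_inv]
  calc _ ≤ ‖(u : R)‖ * ‖Ring.inverse x‖ * ‖(↑u⁻¹ : R)‖ := norm_mul₃_le
    _ = _ := by ring

theorem map_ringInverse {F M N : Type*} [MonoidWithZero M] [MonoidWithZero N] [FunLike F M N]
    [MonoidHomClass F M N] (φ : F) {x : M} (hx : IsUnit x) :
    Ring.inverse (φ x) = φ (Ring.inverse x) := by
  obtain ⟨u, rfl⟩ := hx
  simpa using Ring.inverse_unit (Units.map (φ : M →* N) u)

namespace Metric

variable {E : Type*} [SeminormedAddCommGroup E]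

theorem infDist_add_le_infDist_sub (x : E) (s : Set E) {t : Set E} {y : E} (hy : y ∈ t) :
    infDist x (s + t) ≤ infDist (x - y) s := by
  rcases s.eq_empty_or_nonempty with rfl | hs
  · simp
  calc infDist x (s + t) ≤ infDist x ((· + y) '' s) :=
        infDist_le_infDist_of_subset (Set.image_subset_iff.2 fun a ha => Set.add_mem_add ha hy)
          (hs.image _)
    _ = infDist (x - y) s := by
        simpa using infDist_image (x := x - y) (t := s) (isometry_add_right y)

theorem inv_infDist_sub_le_inv_infDist_add {s t : Set E} (hst : IsClosed (s + t)) {x y : E}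
    (hx : x ∉ s + t) (hy : y ∈ t) : (infDist (x - y) s)⁻¹ ≤ (infDist x (s + t))⁻¹ := by
  rcases s.eq_empty_or_nonempty with rfl | hs
  · simp
  have hpos : 0 < infDist x (s + t) := (hst.notMem_iff_infDist_pos (hs.add ⟨y, hy⟩)).1 hx
  exact inv_anti₀ hpos (infDist_add_le_infDist_sub x s hy)

end Metric

theorem spectrum.notMem_iff_isUnit_sub_algebraMap {R A : Type*} [CommSemiring R] [Ring A]
    [Algebra R A] {a : A} {r : R} : r ∉ spectrum R a ↔ IsUnit (a - algebraMap R A r) := by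
  rw [spectrum.notMem_iff, ← IsUnit.neg_iff, neg_sub]

theorem IsStarNormal.norm_ringInverse_sub_algebraMap_le {A : Type*} [CStarAlgebra A] (a : A)
    [IsStarNormal a] (w : ℂ) :
    ‖Ring.inverse (a - algebraMap ℂ A w)‖ ≤ (Metric.infDist w (spectrum ℂ a))⁻¹ := by
  by_cases hw : w ∈ spectrum ℂ a
  · have : ¬IsUnit (a - algebraMap ℂ A w) := fun h =>
      spectrum.notMem_iff_isUnit_sub_algebraMap.2 h hw
    simp [Ring.inverse_non_unit _ this, Metric.infDist_nonneg]
  have hne : ∀ x ∈ spectrum ℂ a, x - w ≠ 0 := fun x hx h => hw (sub_eq_zero.1 h ▸ hx)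
  have hcfc : cfc (fun x => x - w) a = a - algebraMap ℂ A w := by
    rw [cfc_sub (fun x => x) (fun _ => w) a, cfc_id' ℂ a, cfc_const w a]
  rw [← hcfc, ← cfc_inv _ a hne]
  refine norm_cfc_le (inv_nonneg.2 Metric.infDist_nonneg) fun x hx => ?_
  have hpos : 0 < Metric.infDist w (spectrum ℂ a) :=
    ((spectrum.isClosed a).notMem_iff_infDist_pos ⟨x, hx⟩).1 hw
  rw [norm_inv, ← dist_eq_norm, dist_comm]
  exact inv_anti₀ hpos (Metric.infDist_le_dist_of_mem hx)

namespace Matrix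

variable {R n : Type*} [CommRing R] [Fintype n] [DecidableEq n]

theorem mem_spectrum_of_mulVec_eq_smul {B : Matrix n n R} {v : n → R} {μ : R} (hv : v ≠ 0)
    (h : B *ᵥ v = μ • v) : μ ∈ spectrum R B := by
  rw [← spectrum_toLin']
  exact (Module.End.hasEigenvalue_of_hasEigenvector
    ⟨Module.End.mem_eigenspace_iff.2 h, hv⟩).mem_spectrum

theorem mul_toMatrix_eq_toMatrix_mul_diagonal (B : Matrix n n R) (v : Module.Basis n R (n → R))
    (μ : n → R) (h : ∀ i, B *ᵥ v i = μ i • v i) :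
    B * (Pi.basisFun R n).toMatrix v = (Pi.basisFun R n).toMatrix v * diagonal μ := by
  ext i j
  rw [mul_diagonal]
  simpa [mul_apply, Module.Basis.toMatrix_apply, mulVec, dotProduct, mul_comm]
    using congrFun (h j) i

end Matrix

namespace PiLp

variable {𝕜 ι E : Type*} [NontriviallyNormedField 𝕜] [Fintype ι] [NormedAddCommGroup E]
  [NormedSpace 𝕜 E]

noncomputable def diagonalCLM :
    (ι → E →L[𝕜] E) →* (PiLp 2 (fun _ : ι => E) →L[𝕜] PiLp 2 (fun _ : ι => E)) where
  toFun f := (PiLp.continuousLinearEquiv 2 𝕜 _).symm.toContinuousLinearMap ∘L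
    ContinuousLinearMap.piMap f ∘L (PiLp.continuousLinearEquiv 2 𝕜 _).toContinuousLinearMap
  map_one' := rfl
  map_mul' _ _ := rfl

@[simp]
theorem diagonalCLM_apply (f : ι → E →L[𝕜] E) (x : PiLp 2 (fun _ : ι => E)) (i : ι) :
    diagonalCLM f x i = f i (x i) :=
  rfl

theorem norm_diagonalCLM_le {f : ι → E →L[𝕜] E} {c : ℝ} (hc : 0 ≤ c) (hf : ∀ i, ‖f i‖ ≤ c) :
    ‖diagonalCLM f‖ ≤ c := by
  refine ContinuousLinearMap.opNorm_le_bound _ hc fun x => ?_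
  rw [norm_eq_of_L2, norm_eq_of_L2, ← Real.sqrt_sq hc, ← Real.sqrt_mul (sq_nonneg c),
    Finset.mul_sum]
  refine Real.sqrt_le_sqrt (Finset.sum_le_sum fun i _ => ?_)
  rw [← mul_pow, diagonalCLM_apply]
  gcongr
  exact (f i).le_of_opNorm_le (hf i) (x i)

theorem diagonalCLM_ringInverse {f : ι → E →L[𝕜] E} (hf : ∀ i, IsUnit (f i)) :
    Ring.inverse (diagonalCLM f) = diagonalCLM fun i => Ring.inverse (f i) := by
  have hf' : IsUnit f := Pi.isUnit_iff.2 hf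
  rw [map_ringInverse _ hf']
  congr 1
  funext i
  exact (map_ringInverse (Pi.evalMonoidHom _ i) hf').symm

variable [DecidableEq ι]

noncomputable def matrixCLM :
    Matrix ι ι 𝕜 →* (PiLp 2 (fun _ : ι => E) →L[𝕜] PiLp 2 (fun _ : ι => E)) where
  toFun M := (PiLp.continuousLinearEquiv 2 𝕜 _).symm.toContinuousLinearMap ∘L
    (ContinuousLinearMap.pi fun i => ∑ j, M i j • ContinuousLinearMap.proj j) ∘L
    (PiLp.continuousLinearEquiv 2 𝕜 _).toContinuousLinearMap
  map_one' := by
    ext x i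
    simp [Matrix.one_apply]
  map_mul' M N := by
    ext x i
    simpa [Matrix.mul_apply, Finset.smul_sum, smul_smul, Finset.sum_smul] using Finset.sum_comm

@[simp]
theorem matrixCLM_apply (M : Matrix ι ι 𝕜) (x : PiLp 2 (fun _ : ι => E)) (i : ι) :
    matrixCLM M x i = ∑ j, M i j • x j := by
  simp [matrixCLM]

theorem commute_diagonalCLM_const_matrixCLM (A : E →L[𝕜] E) (M : Matrix ι ι 𝕜) :
    Commute (diagonalCLM fun _ : ι => A) (matrixCLM M) := by
  ext x i
  simp

theorem diagonalCLM_add_matrixCLM_sub_algebraMap_mul_matrixCLM (A : E →L[𝕜] E)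
    {B V : Matrix ι ι 𝕜} {μ : ι → 𝕜} (h : B * V = V * Matrix.diagonal μ) (z : 𝕜) :
    (diagonalCLM (fun _ => A) + matrixCLM B - algebraMap 𝕜 _ z) * matrixCLM V =
      matrixCLM V * diagonalCLM fun j => A - algebraMap 𝕜 _ (z - μ j) := by
  have hdiag : diagonalCLM (fun _ => A) + matrixCLM (Matrix.diagonal μ) - algebraMap 𝕜 _ z =
      diagonalCLM (E := E) fun j => A - algebraMap 𝕜 _ (z - μ j) := by
    ext x i
    simp [Matrix.diagonal_apply, Algebra.algebraMap_eq_smul_one, sub_smul, sub_sub_eq_add_sub,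
      add_sub_right_comm]
  rw [← hdiag, sub_mul, add_mul, ← map_mul, h, map_mul,
    (commute_diagonalCLM_const_matrixCLM A V).eq, mul_sub, mul_add, Algebra.commutes]

end PiLp

theorem resolvent_bound_tensor_sum_normal_diagonalizable_general
    {H : Type*} [NormedAddCommGroup H] [InnerProductSpace ℂ H] [CompleteSpace H]
    (A : H →L[ℂ] H) (hA : IsStarNormal A)
    (d : ℕ) (B : Matrix (Fin d) (Fin d) ℂ)
    (hdiag : ∃ v : Module.Basis (Fin d) ℂ (Fin d → ℂ),
      ∀ i, ∃ μ : ℂ, B.mulVecLin (v i) = μ • v i)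
    (T : PiLp 2 (fun _ : Fin d => H) →L[ℂ] PiLp 2 (fun _ : Fin d => H))
    (hT : ∀ (x : PiLp 2 (fun _ : Fin d => H)) (i : Fin d),
      T x i = A (x i) + ∑ j, B i j • x j) :
    ∃ C > 0, ∀ z : ℂ, z ∉ spectrum ℂ A + spectrum ℂ B →
      IsUnit (T - z • 1) ∧
      ‖Ring.inverse (T - z • 1)‖ ≤
        C / Metric.infDist z (spectrum ℂ A + spectrum ℂ B) := by
  obtain ⟨v, hv⟩ := hdiag
  choose μ hμ using hv
  have hμσ (i : Fin d) : μ i ∈ spectrum ℂ B :=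
    Matrix.mem_spectrum_of_mulVec_eq_smul (v.ne_zero i) (hμ i)
  have hT' : T = PiLp.diagonalCLM (fun _ => A) + PiLp.matrixCLM B := by
    ext x i
    simp [hT]
  have hclosed : IsClosed (spectrum ℂ A + spectrum ℂ B) :=
    ((spectrum.isCompact A).add (Matrix.finite_spectrum B).isCompact).isClosed
  let _ := (Pi.basisFun ℂ (Fin d)).invertibleToMatrix v
  let Q := Units.map (PiLp.matrixCLM (E := H))
    (unitOfInvertible ((Pi.basisFun ℂ (Fin d)).toMatrix v))
  refine ⟨‖Q.val‖ * ‖(Q⁻¹).val‖ + 1, by positivity, fun z hz => ?_⟩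
  set D := Metric.infDist z (spectrum ℂ A + spectrum ℂ B)
  have hD : 0 ≤ D⁻¹ := inv_nonneg.2 Metric.infDist_nonneg
  have hunit (j : Fin d) : IsUnit (A - algebraMap ℂ _ (z - μ j)) :=
    spectrum.notMem_iff_isUnit_sub_algebraMap.1 fun h =>
      hz (by simpa using Set.add_mem_add h (hμσ j))
  have hconj : T - z • 1 =
      Q.val * PiLp.diagonalCLM (fun j => A - algebraMap ℂ _ (z - μ j)) * (Q⁻¹).val := by
    rw [Units.eq_mul_inv_iff_mul_eq, hT', ← Algebra.algebraMap_eq_smul_one]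
    exact PiLp.diagonalCLM_add_matrixCLM_sub_algebraMap_mul_matrixCLM A
      (B.mul_toMatrix_eq_toMatrix_mul_diagonal v μ hμ) z
  have hblocks :
      ‖Ring.inverse (PiLp.diagonalCLM fun j => A - algebraMap ℂ _ (z - μ j))‖ ≤ D⁻¹ := by
    rw [PiLp.diagonalCLM_ringInverse hunit]
    exact PiLp.norm_diagonalCLM_le hD fun j =>
      (IsStarNormal.norm_ringInverse_sub_algebraMap_le A (z - μ j)).trans
        (Metric.inv_infDist_sub_le_inv_infDist_add hclosed hz (hμσ j))
  rw [hconj]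
  refine ⟨(Units.isUnit_mul_units _ _).2 ((Units.isUnit_units_mul _ _).2
    ((Pi.isUnit_iff.2 hunit).map _)), ?_⟩
  calc _ ≤ ‖Q.val‖ * ‖(Q⁻¹).val‖ * D⁻¹ :=
        (norm_ringInverse_units_mul_mul_inv_le Q _).trans (by gcongr)
    _ ≤ _ := by
        rw [div_eq_mul_inv]
        gcongr
        linarith

/-- **Tensor-spectrum lemma, semisimple resolvent estimate (case n = 1).**
Let `A` be a bounded normal operator on a complex Hilbert space `H` and `B` a
diagonalizable `d × d` complex matrix (`ℂ^d` has a basis of eigenvectors of `B`).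
Then there is `C > 0` such that for every `z ∉ σ(A) + σ(B)` the operator `T - z`
(where `T` realizes `A ⊗ 1 + 1 ⊗ B` on `H^d`) is invertible with
`‖(T - z)⁻¹‖ ≤ C / dist(z, σ(A) + σ(B))`. -/
theorem resolvent_bound_tensor_sum_normal_diagonalizable
    {H : Type*} [NormedAddCommGroup H] [InnerProductSpace ℂ H] [CompleteSpace H]
    (A : H →L[ℂ] H) (hA : IsStarNormal A)
    (d : ℕ) (hd : 1 ≤ d) (B : Matrix (Fin d) (Fin d) ℂ)
    (hdiag : ∃ v : Module.Basis (Fin d) ℂ (Fin d → ℂ),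
      ∀ i, ∃ μ : ℂ, B.mulVecLin (v i) = μ • v i)
    (T : PiLp 2 (fun _ : Fin d => H) →L[ℂ] PiLp 2 (fun _ : Fin d => H))
    (hT : ∀ (x : PiLp 2 (fun _ : Fin d => H)) (i : Fin d),
      T x i = A (x i) + ∑ j, B i j • x j) :
    ∃ C > 0, ∀ z : ℂ, z ∉ spectrum ℂ A + spectrum ℂ B →
      IsUnit (T - z • 1) ∧
      ‖Ring.inverse (T - z • 1)‖ ≤
        C / Metric.infDist z (spectrum ℂ A + spectrum ℂ B) :=
  resolvent_bound_tensor_sum_normal_diagonalizable_general A hA d B hdiag T hT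
end

section
/- Let A be a bounded normal operator on a complex Hilbert space H, B a d×d complex matrix, and let c be an isolated point of σ(A) + σ(B), i.e. there is r > 0 such that the closed disc of radius r centered at c intersects σ(A) + σ(B) exactly in {c}. Then the set S_c := {(a, b) ∈ σ(A) × σ(B) : a + b = c} is nonempty, finite with at most d elements, and for every (a, b) ∈ S_c the point a is an isolated point of σ(A). -/
open scoped Pointwise

/-- The set of ways to decompose `c` as a sum of a point of `SA` and a point of `SB`. -/
def sumDecompositions (SA SB : Set ℂ) (c : ℂ) : Set (ℂ × ℂ) :=
  {p : ℂ × ℂ | p.1 ∈ SA ∧ p.2 ∈ SB ∧ p.1 + p.2 = c}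

lemma spectrum_matrix_ncard_le (d : ℕ) (B : Matrix (Fin d) (Fin d) ℂ) :
    (spectrum ℂ B).ncard ≤ d := by
  rw [← AlgEquiv.spectrum_eq (Matrix.toLinAlgEquiv <| Pi.basisFun ℂ (Fin d)) B]
  set f := Matrix.toLinAlgEquiv (Pi.basisFun ℂ (Fin d)) B with hf
  have hfin : (spectrum ℂ f).Finite := Module.End.finite_spectrum f
  haveI : Fintype (spectrum ℂ f) := hfin.fintype
  have hE : ∀ μ : spectrum ℂ f, Module.End.HasEigenvalue f μ := fun μ =>
    Module.End.hasEigenvalue_iff_mem_spectrum.mpr μ.2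
  choose xs hxs using fun μ : spectrum ℂ f => (hE μ).exists_hasEigenvector
  have hli : LinearIndependent ℂ xs :=
    Module.End.eigenvectors_linearIndependent f (spectrum ℂ f) xs hxs
  have hcard := hli.fintype_card_le_finrank
  rw [Set.ncard_eq_toFinset_card']
  simpa [Set.toFinset_card, Module.finrank_pi] using hcard

/-- **Tensor-spectrum lemma, part (iii), structural part.**
Let `A` be a bounded normal operator on a complex Hilbert space `H`, `B` a `d × d`
complex matrix, and `c` an isolated point of `σ(A) + σ(B)` (the closed disc of some
radius `r > 0` around `c` meets `σ(A) + σ(B)` exactly in `{c}`). Then the set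
`S_c = {(a, b) ∈ σ(A) × σ(B) : a + b = c}` is nonempty, finite with at most `d`
elements, and for every `(a, b) ∈ S_c` the point `a` is an isolated point of `σ(A)`. -/
theorem isolated_point_decomposition_tensor_sum
    {H : Type*} [NormedAddCommGroup H] [InnerProductSpace ℂ H] [CompleteSpace H]
    (A : H →L[ℂ] H) (hA : IsStarNormal A)
    (d : ℕ) (hd : 1 ≤ d) (B : Matrix (Fin d) (Fin d) ℂ)
    (c : ℂ) (r : ℝ) (hr : 0 < r)
    (hc : Metric.closedBall c r ∩ (spectrum ℂ A + spectrum ℂ B) = {c}) :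
    (sumDecompositions (spectrum ℂ A) (spectrum ℂ B) c).Nonempty ∧
    (sumDecompositions (spectrum ℂ A) (spectrum ℂ B) c).Finite ∧
    (sumDecompositions (spectrum ℂ A) (spectrum ℂ B) c).ncard ≤ d ∧
    ∀ p ∈ sumDecompositions (spectrum ℂ A) (spectrum ℂ B) c,
      ∃ s > (0 : ℝ), Metric.closedBall p.1 s ∩ spectrum ℂ A = {p.1} := by
  -- c is in the sum
  have hcmem : c ∈ spectrum ℂ A + spectrum ℂ B := by
    have : c ∈ Metric.closedBall c r ∩ (spectrum ℂ A + spectrum ℂ B) := by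
      rw [hc]; rfl
    exact this.2
  obtain ⟨a, ha, b, hb, hab⟩ := Set.mem_add.mp hcmem
  have hne : (sumDecompositions (spectrum ℂ A) (spectrum ℂ B) c).Nonempty :=
    ⟨(a, b), ha, hb, hab⟩
  -- the set injects into spectrum of B
  have hsub : sumDecompositions (spectrum ℂ A) (spectrum ℂ B) c ⊆
      (fun b => (c - b, b)) '' (spectrum ℂ B) := by
    rintro ⟨x, y⟩ ⟨hx, hy, hxy⟩
    exact ⟨y, hy, by simp [← hxy]⟩
  have hBfin : (spectrum ℂ B).Finite := Matrix.finite_spectrum B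
  have hfin : (sumDecompositions (spectrum ℂ A) (spectrum ℂ B) c).Finite :=
    (hBfin.image _).subset hsub
  have hcard : (sumDecompositions (spectrum ℂ A) (spectrum ℂ B) c).ncard ≤ d := by
    calc (sumDecompositions (spectrum ℂ A) (spectrum ℂ B) c).ncard
        ≤ ((fun b => (c - b, b)) '' (spectrum ℂ B)).ncard :=
          Set.ncard_le_ncard hsub (hBfin.image _)
      _ ≤ (spectrum ℂ B).ncard := Set.ncard_image_le hBfin
      _ ≤ d := spectrum_matrix_ncard_le d B
  refine ⟨hne, hfin, hcard, ?_⟩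
  rintro ⟨x, y⟩ ⟨hx, hy, hxy⟩
  refine ⟨r, hr, ?_⟩
  ext z
  simp only [Set.mem_inter_iff, Metric.mem_closedBall, Set.mem_singleton_iff]
  constructor
  · rintro ⟨hz, hzA⟩
    have hsum : z + y ∈ Metric.closedBall c r ∩ (spectrum ℂ A + spectrum ℂ B) := by
      refine ⟨?_, Set.add_mem_add hzA hy⟩
      rw [Metric.mem_closedBall]
      calc dist (z + y) c = dist z x := by
            rw [← hxy]; exact dist_add_right z x y
        _ ≤ r := hz
    rw [hc, Set.mem_singleton_iff] at hsum
    have : z + y = x + y := by rw [hsum, hxy]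
    exact add_right_cancel this
  · rintro rfl
    exact ⟨by simp [hr.le], hx⟩
end

section
/- (Isospectrality of the Feshbach map, part (i), bounded case.) Let X be a complex Banach space, P a bounded projection on X (P ∘ P = P), Q := 1 − P, and H a bounded operator on X. Assume Q H Q is invertible on the range of Q, in the sense that there exists a bounded operator R on X with R = Q ∘ R ∘ Q, (Q ∘ H ∘ Q) ∘ R = Q, and R ∘ (Q ∘ H ∘ Q) = Q. Define the Feshbach operator F := P ∘ (H − H ∘ R ∘ H) ∘ P. Then H : X → X is bijective if and only if the restriction of F to the range of P is a bijection of the range of P onto itself. Equivalently, 0 ∈ σ(H) if and only if 0 ∈ σ(F restricted to Ran P). -/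
/-- **Isospectrality of the Feshbach map, part (i) (bounded case).**
Let `X` be a complex Banach space, `P` a bounded projection on `X`, `Q = 1 - P`, and
`Hop` a bounded operator on `X` such that `Q Hop Q` is invertible on the range of `Q`,
with bounded inverse `R` (extended by zero off `Ran Q`, i.e. `R = Q R Q`,
`(Q Hop Q) R = Q` and `R (Q Hop Q) = Q`). Let `F := P (Hop - Hop R Hop) P` be the
Feshbach operator. Then `Hop : X → X` is bijective if and only if the restriction of
`F` to the range of `P` is a bijection of the range of `P` onto itself. -/
theorem feshbach_isospectrality_bijective
    {X : Type*} [NormedAddCommGroup X] [NormedSpace ℂ X] [CompleteSpace X]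
    (P Hop R : X →L[ℂ] X)
    (hP : P ∘L P = P)
    (hRQ : R = (1 - P) ∘L R ∘L (1 - P))
    (hR1 : ((1 - P) ∘L Hop ∘L (1 - P)) ∘L R = 1 - P)
    (hR2 : R ∘L ((1 - P) ∘L Hop ∘L (1 - P)) = 1 - P)
    (F : X →L[ℂ] X)
    (hF : F = P ∘L (Hop - Hop ∘L R ∘L Hop) ∘L P) :
    Function.Bijective Hop ↔ Set.BijOn F (Set.range P) (Set.range P) := by
  set Q : X →L[ℂ] X := 1 - P with hQdef
  have hP' : P * P = P := hP
  have hRQ' : R = Q * R * Q := hRQ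
  have hR1' : Q * Hop * Q * R = Q := hR1
  have hR2' : R * (Q * Hop * Q) = Q := hR2
  have hF' : F = P * (Hop - Hop * R * Hop) * P := hF
  -- basic projection algebra
  have hPQ : P * Q = 0 := by rw [hQdef, mul_sub, hP', mul_one, sub_self]
  have hQP : Q * P = 0 := by rw [hQdef, sub_mul, hP', one_mul, sub_self]
  have hQQ : Q * Q = Q := by
    rw [hQdef, sub_mul, one_mul, mul_sub, mul_one, hP']
    abel
  have hPR : P * R = 0 := by
    rw [hRQ', ← mul_assoc, ← mul_assoc, hPQ, zero_mul, zero_mul]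
  have hRP : R * P = 0 := by
    rw [hRQ', mul_assoc, hQP, mul_zero]
  have hQR : Q * R = R := by
    conv_lhs => rw [hRQ']
    rw [← mul_assoc, ← mul_assoc, hQQ, ← hRQ']
  have hRQ2 : R * Q = R := by
    conv_lhs => rw [hRQ']
    rw [mul_assoc, hQQ, ← hRQ']
  -- the block-diagonal operator G and the nilpotent correctors
  set u : X →L[ℂ] X := P * Hop * R with hudef
  set v : X →L[ℂ] X := R * Hop * P with hvdef
  set G : X →L[ℂ] X := F + Q * Hop * Q with hGdef
  have hGform : G = P * Hop * P - P * Hop * R * Hop * P + Q * Hop * Q := by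
    rw [hGdef, hF']; noncomm_ring
  have hFR : F * R = 0 := by
    rw [hF', mul_assoc, hPR, mul_zero]
  have hRF : R * F = 0 := by
    rw [hF', ← mul_assoc, ← mul_assoc, hRP, zero_mul, zero_mul]
  have hRG : R * G = Q := by
    rw [hGdef, mul_add, hRF, zero_add, hR2']
  have hGR : G * R = Q := by
    rw [hGdef, add_mul, hFR, zero_add, hR1']
  have e1 : u * G = P * Hop * Q := by
    rw [hudef, mul_assoc, hRG]
  have e2 : G * v = Q * Hop * P := by
    rw [hvdef, ← mul_assoc, ← mul_assoc, hGR]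
  have e3 : u * G * v = P * Hop * R * Hop * P := by
    rw [e1, hvdef]
    have : P * Hop * Q * (R * Hop * P) = P * Hop * (Q * R) * Hop * P := by
      noncomm_ring
    rw [this, hQR]
  have hPplusQ : P + Q = 1 := by rw [hQdef]; abel
  have key : (1 + u) * G * (1 + v) = Hop := by
    have expand : (1 + u) * G * (1 + v) = G + u * G + G * v + u * G * v := by
      noncomm_ring
    rw [expand, e3, e1, e2, hGform]
    have hH : Hop = (P + Q) * Hop * (P + Q) := by rw [hPplusQ, one_mul, mul_one]
    conv_rhs => rw [hH]
    noncomm_ring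
  -- 1 + u and 1 + v are invertible
  have hu2 : u * u = 0 := by
    rw [hudef]
    have : P * Hop * R * (P * Hop * R) = P * Hop * (R * P) * (Hop * R) := by
      noncomm_ring
    rw [this, hRP, mul_zero, zero_mul]
  have hv2 : v * v = 0 := by
    rw [hvdef]
    have : R * Hop * P * (R * Hop * P) = R * Hop * (P * R) * (Hop * P) := by
      noncomm_ring
    rw [this, hPR, mul_zero, zero_mul]
  have huL : (1 - u) * (1 + u) = 1 := by
    have : (1 - u) * (1 + u) = 1 - u * u := by noncomm_ring
    rw [this, hu2, sub_zero]
  have huR : (1 + u) * (1 - u) = 1 := by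
    have : (1 + u) * (1 - u) = 1 - u * u := by noncomm_ring
    rw [this, hu2, sub_zero]
  have hvL : (1 - v) * (1 + v) = 1 := by
    have : (1 - v) * (1 + v) = 1 - v * v := by noncomm_ring
    rw [this, hv2, sub_zero]
  have hvR : (1 + v) * (1 - v) = 1 := by
    have : (1 + v) * (1 - v) = 1 - v * v := by noncomm_ring
    rw [this, hv2, sub_zero]
  have appeq : ∀ (a b : X →L[ℂ] X) (x : X), (a * b) x = a (b x) := fun _ _ _ => rfl
  have bij_of_inv : ∀ (a b : X →L[ℂ] X), a * b = 1 → b * a = 1 →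
      Function.Bijective a := by
    intro a b hab hba
    refine Function.bijective_iff_has_inverse.mpr ⟨b, fun x => ?_, fun x => ?_⟩
    · have := DFunLike.congr_fun hba x
      simpa [appeq] using this
    · have := DFunLike.congr_fun hab x
      simpa [appeq] using this
  have hubij : Function.Bijective (1 + u : X →L[ℂ] X) := bij_of_inv _ _ huR huL
  have hvbij : Function.Bijective (1 + v : X →L[ℂ] X) := bij_of_inv _ _ hvR hvL
  have hfun : ⇑Hop = ⇑(1 + u : X →L[ℂ] X) ∘ ⇑G ∘ ⇑(1 + v : X →L[ℂ] X) := by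
    funext x
    rw [← key]
    rfl
  have step1 : Function.Bijective Hop ↔ Function.Bijective G := by
    rw [show Function.Bijective ⇑Hop ↔
        Function.Bijective (⇑(1 + u : X →L[ℂ] X) ∘ ⇑G ∘ ⇑(1 + v : X →L[ℂ] X)) from
      by rw [hfun]]
    rw [Function.Bijective.of_comp_iff' hubij, Function.Bijective.of_comp_iff _ hvbij]
  -- now: Bijective G ↔ BijOn F (range P) (range P)
  have hmem : ∀ x : X, x ∈ Set.range P ↔ P x = x := by
    intro x
    constructor
    · rintro ⟨y, rfl⟩
      exact DFunLike.congr_fun hP' y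
    · intro h
      exact ⟨x, h⟩
  have hPF : P * F = F := by rw [hF', ← mul_assoc, ← mul_assoc, hP']
  have hFP : F * P = F := by rw [hF', mul_assoc, hP']
  have hQF : Q * F = 0 := by
    rw [hF', ← mul_assoc, ← mul_assoc, hQP, zero_mul, zero_mul]
  have hPG : P * G = F := by
    rw [hGdef, mul_add, hPF, ← mul_assoc, ← mul_assoc, hPQ, zero_mul, zero_mul, add_zero]
  have hQG : Q * G = Q * Hop * Q := by
    rw [hGdef, mul_add, hQF, zero_add, ← mul_assoc, ← mul_assoc, hQQ]
  -- pointwise decomposition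
  have hxPQ : ∀ x : X, P x + Q x = x := by
    intro x
    have := DFunLike.congr_fun hPplusQ x
    simpa using this
  have hQzero : ∀ x : X, (Q * Hop * Q) x = 0 → Q x = 0 := by
    intro x hx
    have := DFunLike.congr_fun hR2' x
    rw [appeq] at this
    rw [hx] at this
    simpa [appeq] using this.symm
  have step2 : Function.Bijective G ↔ Set.BijOn F (Set.range P) (Set.range P) := by
    constructor
    · intro hG
      refine ⟨?_, ?_, ?_⟩
      · intro x hx
        rw [hmem]
        exact (DFunLike.congr_fun hPF x : _)
      · intro x hx y hy hxy
        have hQx : Q x = 0 := by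
          rw [hmem] at hx
          have : Q x = x - P x := rfl
          rw [this, hx, sub_self]
        have hQy : Q y = 0 := by
          rw [hmem] at hy
          have : Q y = y - P y := rfl
          rw [this, hy, sub_self]
        have hGx : G x = F x := by
          rw [hGdef]
          have : (F + Q * Hop * Q) x = F x + (Q * Hop) (Q x) := rfl
          rw [this, hQx, map_zero, add_zero]
        have hGy : G y = F y := by
          rw [hGdef]
          have : (F + Q * Hop * Q) y = F y + (Q * Hop) (Q y) := rfl
          rw [this, hQy, map_zero, add_zero]
        exact hG.1 (by rw [hGx, hGy, hxy])
      · intro y hy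
        rw [hmem] at hy
        obtain ⟨x, hx⟩ := hG.2 y
        have hQy : Q y = 0 := by
          have : Q y = y - P y := rfl
          rw [this, hy, sub_self]
        have hQGx : (Q * Hop * Q) x = 0 := by
          have h1 : (Q * Hop * Q) x = Q (G x) := (DFunLike.congr_fun hQG x).symm
          rw [h1, hx, hQy]
        have hQx : Q x = 0 := hQzero x hQGx
        have hPx : P x = x := by
          have h : x - P x = 0 := hQx
          exact (sub_eq_zero.mp h).symm
        refine ⟨x, (hmem x).mpr hPx, ?_⟩
        have : F x = P (G x) := (DFunLike.congr_fun hPG x).symm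
        rw [this, hx, hy]
    · intro hB
      constructor
      · intro x y hxy
        have hFx : F x = F y := by
          have h1 : F x = P (G x) := (DFunLike.congr_fun hPG x).symm
          have h2 : F y = P (G y) := (DFunLike.congr_fun hPG y).symm
          rw [h1, h2, hxy]
        have hQHQ : (Q * Hop * Q) x = (Q * Hop * Q) y := by
          have h1 : (Q * Hop * Q) x = Q (G x) := (DFunLike.congr_fun hQG x).symm
          have h2 : (Q * Hop * Q) y = Q (G y) := (DFunLike.congr_fun hQG y).symm
          rw [h1, h2, hxy]
        have hQxy : Q x = Q y := by
          have h1 := DFunLike.congr_fun hR2' x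
          have h2 := DFunLike.congr_fun hR2' y
          rw [appeq] at h1 h2
          rw [← h1, ← h2, hQHQ]
        have hPxy : P x = P y := by
          have hxr : P x ∈ Set.range P := ⟨x, rfl⟩
          have hyr : P y ∈ Set.range P := ⟨y, rfl⟩
          refine hB.2.1 hxr hyr ?_
          have h1 : F (P x) = F x := by
            have := DFunLike.congr_fun hFP x
            rw [appeq] at this
            exact this
          have h2 : F (P y) = F y := by
            have := DFunLike.congr_fun hFP y
            rw [appeq] at this
            exact this
          rw [h1, h2, hFx]
        calc x = P x + Q x := (hxPQ x).symm
          _ = P y + Q y := by rw [hPxy, hQxy]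
          _ = y := hxPQ y
      · intro y
        have hPyr : P y ∈ Set.range P := ⟨y, rfl⟩
        obtain ⟨p, hp, hfp⟩ := hB.2.2 hPyr
        rw [hmem] at hp
        refine ⟨p + R y, ?_⟩
        have hGp : G p = F p := by
          have hQp : Q p = 0 := by
            have : Q p = p - P p := rfl
            rw [this, hp, sub_self]
          have : G p = F p + (Q * Hop) (Q p) := rfl
          rw [this, hQp, map_zero, add_zero]
        have hGq : G (R y) = Q y := by
          have h1 : G (R y) = (G * R) y := rfl
          rw [h1, hGR]
        rw [map_add, hGp, hGq, hfp, hxPQ]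
  rw [step1, step2]
end

section
/- (Isospectrality of the Feshbach map, part (ii), bounded case.) Let X be a complex Banach space, P a bounded projection on X, Q := 1 − P, and H a bounded operator on X such that there exists a bounded operator R on X with R = Q ∘ R ∘ Q, (Q ∘ H ∘ Q) ∘ R = Q, and R ∘ (Q ∘ H ∘ Q) = Q. Define F := P ∘ (H − H ∘ R ∘ H) ∘ P. Then the map ψ ↦ P ψ is a linear bijection from ker H onto ker F ∩ Ran P, and its inverse is the map φ ↦ φ − R(H φ). In particular, H ψ = 0 implies F(Pψ) = 0, and F φ = 0 with φ ∈ Ran P implies H((1 − R H)φ) = 0. -/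
/-- **Isospectrality of the Feshbach map, part (ii) (bounded case).**
Let `X` be a complex Banach space, `P` a bounded projection on `X`, `Q = 1 - P`, and
`Hop` a bounded operator on `X` such that `Q Hop Q` is invertible on the range of `Q`,
with bounded inverse `R` (`R = Q R Q`, `(Q Hop Q) R = Q`, `R (Q Hop Q) = Q`). Let
`F := P (Hop - Hop R Hop) P`. Then `ψ ↦ P ψ` is a bijection from `ker Hop` onto
`ker F ∩ Ran P`, with inverse `φ ↦ φ - R (Hop φ)`. In particular `Hop ψ = 0` implies
`F (P ψ) = 0`, and `F φ = 0` with `φ ∈ Ran P` implies `Hop ((1 - R Hop) φ) = 0`. -/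
theorem feshbach_isospectrality_kernels
    {X : Type*} [NormedAddCommGroup X] [NormedSpace ℂ X] [CompleteSpace X]
    (P Hop R : X →L[ℂ] X)
    (hP : P ∘L P = P)
    (hRQ : R = (1 - P) ∘L R ∘L (1 - P))
    (hR1 : ((1 - P) ∘L Hop ∘L (1 - P)) ∘L R = 1 - P)
    (hR2 : R ∘L ((1 - P) ∘L Hop ∘L (1 - P)) = 1 - P)
    (F : X →L[ℂ] X)
    (hF : F = P ∘L (Hop - Hop ∘L R ∘L Hop) ∘L P) :
    (∀ ψ, Hop ψ = 0 → F (P ψ) = 0) ∧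
    (∀ φ, φ ∈ Set.range P → F φ = 0 → Hop (φ - R (Hop φ)) = 0) ∧
    Set.BijOn P {ψ | Hop ψ = 0} ({φ | F φ = 0} ∩ Set.range P) ∧
    Set.InvOn (fun φ => φ - R (Hop φ)) P
      {ψ | Hop ψ = 0} ({φ | F φ = 0} ∩ Set.range P) := by
  have hPx : ∀ x, P (P x) = P x := fun x => ContinuousLinearMap.ext_iff.mp hP x
  have hRQx : ∀ x, R x = R (x - P x) - P (R (x - P x)) := by
    intro x
    have := ContinuousLinearMap.ext_iff.mp hRQ x
    simpa only [ContinuousLinearMap.comp_apply, ContinuousLinearMap.sub_apply,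
      ContinuousLinearMap.one_apply] using this
  have hPR : ∀ x, P (R x) = 0 := by
    intro x
    rw [hRQx x, map_sub, hPx, sub_self]
  have hRQ' : ∀ x, R (x - P x) = R x := by
    intro x
    rw [hRQx x, hPR, sub_zero]
  have hRP : ∀ x, R (P x) = 0 := by
    intro x
    have := hRQ' (P x)
    rw [hPx, sub_self] at this
    rw [← this, map_zero]
  have keyRHQ : ∀ x, R (Hop (x - P x)) = x - P x := by
    intro x
    have := ContinuousLinearMap.ext_iff.mp hR2 x
    simp only [ContinuousLinearMap.comp_apply, ContinuousLinearMap.sub_apply,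
      ContinuousLinearMap.one_apply] at this
    rwa [map_sub, hRP, sub_zero] at this
  have keyQHR : ∀ x, Hop (R x) - P (Hop (R x)) = x - P x := by
    intro x
    have := ContinuousLinearMap.ext_iff.mp hR1 x
    simp only [ContinuousLinearMap.comp_apply, ContinuousLinearMap.sub_apply,
      ContinuousLinearMap.one_apply] at this
    rwa [hPR, sub_zero] at this
  -- pointwise form of F
  have hFx : ∀ x, F x = P (Hop (P x)) - P (Hop (R (Hop (P x)))) := by
    intro x
    rw [hF]
    simp [ContinuousLinearMap.comp_apply, ContinuousLinearMap.sub_apply, map_sub]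
  -- forward direction
  have fwd : ∀ ψ, Hop ψ = 0 → F (P ψ) = 0 := by
    intro ψ hψ
    have hHP : Hop (P ψ) = -Hop (ψ - P ψ) := by
      rw [map_sub, hψ, zero_sub, neg_neg]
    rw [hFx, hPx, hHP, map_neg R, keyRHQ, map_neg Hop, map_neg P,
      sub_neg_eq_add, neg_add_cancel]
  -- inverse maps target to kernel
  have bwd : ∀ φ, φ ∈ Set.range P → F φ = 0 → Hop (φ - R (Hop φ)) = 0 := by
    intro φ hφ hFφ
    obtain ⟨y, rfl⟩ := hφ
    have hPφ : P (P y) = P y := hPx y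
    rw [hFx, hPφ] at hFφ
    have h2 := keyQHR (Hop (P y))
    rw [map_sub]
    -- goal : Hop (P y) - Hop (R (Hop (P y))) = 0
    have : Hop (P y) - Hop (R (Hop (P y))) =
        (P (Hop (P y)) - P (Hop (R (Hop (P y))))) +
        ((Hop (P y) - P (Hop (P y))) - (Hop (R (Hop (P y))) - P (Hop (R (Hop (P y)))))) := by
      abel
    rw [this, hFφ, h2, sub_self, add_zero]
  have leftInv : ∀ ψ ∈ {ψ | Hop ψ = 0}, P ψ - R (Hop (P ψ)) = ψ := by
    intro ψ hψ
    have hψ' : Hop ψ = 0 := hψ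
    have hHP : Hop (P ψ) = -Hop (ψ - P ψ) := by
      rw [map_sub, hψ', zero_sub, neg_neg]
    rw [hHP, map_neg, keyRHQ, sub_neg_eq_add]
    abel
  have rightInv : ∀ φ ∈ ({φ | F φ = 0} ∩ Set.range P), P (φ - R (Hop φ)) = φ := by
    rintro φ ⟨_, y, rfl⟩
    rw [map_sub, hPR, sub_zero, hPx]
  have mapsTo : Set.MapsTo P {ψ | Hop ψ = 0} ({φ | F φ = 0} ∩ Set.range P) :=
    fun ψ hψ => ⟨fwd ψ hψ, ⟨ψ, rfl⟩⟩
  have invMapsTo : Set.MapsTo (fun φ => φ - R (Hop φ))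
      ({φ | F φ = 0} ∩ Set.range P) {ψ | Hop ψ = 0} :=
    fun φ hφ => bwd φ hφ.2 hφ.1
  have hInv : Set.InvOn (fun φ => φ - R (Hop φ)) P
      {ψ | Hop ψ = 0} ({φ | F φ = 0} ∩ Set.range P) :=
    ⟨fun ψ hψ => leftInv ψ hψ, fun φ hφ => rightInv φ hφ⟩
  exact ⟨fwd, bwd, hInv.bijOn mapsTo invMapsTo, hInv⟩
end

section
/- Let Λ be a d×d complex matrix, λ ∈ ℂ an eigenvalue of Λ of algebraic multiplicity one, and δ > 0 such that every eigenvalue μ ≠ λ of Λ satisfies Im μ ≥ Im λ + δ. Then for every η > 0 there exists a d×d complex matrix Λ' such that: ‖Λ − Λ'‖ ≤ η (operator norm with respect to the Euclidean norm on ℂ^d); Λ' is diagonalizable (ℂ^d has a basis of eigenvectors of Λ'); λ is an eigenvalue of Λ' of algebraic multiplicity one; and every eigenvalue μ' ≠ λ of Λ' satisfies Im μ' ≥ Im λ + δ. -/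
/-!
Triangularize `Λ` as `T = P⁻¹ Λ P`; the diagonal `t` of `T` lists the eigenvalues with
multiplicity, so `lam` occurs at exactly one index `i₀`. Add `τ • diagonal (w * I)` to `T`, where
the real weights `w` are injective, nonnegative and vanish at `i₀`: this keeps `T` triangular,
fixes `lam` and only raises imaginary parts. The new diagonal `t + τ w I` fails to be injective
for only finitely many `τ`, so some small `τ > 0` makes it injective. Then
`Λ' = Λ + τ • P diag(w I) P⁻¹` is `η`-close to `Λ` and has `d` distinct eigenvalues, hence an
eigenbasis.
-/

open Polynomial Module Submodule Set
open scoped Finset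

theorem Submodule.sup_span_range_eq_top_of_mkQ_comp {R M ι : Type*} [Ring R] [AddCommGroup M]
    [Module R M] (p : Submodule R M) (c : Basis ι R (M ⧸ p)) {w : ι → M} (hw : p.mkQ ∘ w = c) :
    p ⊔ span R (range w) = ⊤ := by
  rw [← map_mkQ_eq_top, map_span, ← range_comp, hw, c.span_eq]

theorem Module.End.exists_basis_apply_mem_span_Iic {K V : Type*} [Field K] [IsAlgClosed K]
    [AddCommGroup V] [Module K V] [FiniteDimensional K V] {n : ℕ} (hn : finrank K V = n)
    (f : End K V) :
    ∃ b : Basis (Fin n) K V, ∀ j, f (b j) ∈ span K (b '' Iic j) := by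
  induction n generalizing V with
  | zero => exact ⟨finBasisOfFinrankEq K V hn, fun j => j.elim0⟩
  | succ n ih =>
    have : Nontrivial V := nontrivial_of_finrank_eq_succ hn
    obtain ⟨μ, hμ⟩ := f.exists_eigenvalue
    obtain ⟨v, hv⟩ := hμ.exists_hasEigenvector
    set p := K ∙ v
    have hfp : p ≤ p.comap f := by
      rw [span_singleton_le_iff_mem, mem_comap, hv.apply_eq_smul]
      exact smul_mem _ _ (mem_span_singleton_self v)
    have hQ : finrank K (V ⧸ p) = n := by
      have := p.finrank_quotient_add_finrank
      rw [finrank_span_singleton hv.2, hn] at this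
      omega
    obtain ⟨c, hc⟩ := ih hQ (p.mapQ p f hfp)
    choose w hw using fun j => p.mkQ_surjective (c j)
    replace hw : p.mkQ ∘ w = c := funext hw
    have hspan : ⊤ ≤ span K (range (Fin.cons v w : Fin (n + 1) → V)) := by
      rw [Fin.range_cons, span_insert,
        p.sup_span_range_eq_top_of_mkQ_comp c hw]
    refine ⟨basisOfTopLeSpanOfCardEqFinrank _ hspan (by simp [hn]), fun j => ?_⟩
    simp only [coe_basisOfTopLeSpanOfCardEqFinrank]
    induction j using Fin.cases with
    | zero =>
      rw [Fin.cons_zero, hv.apply_eq_smul]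
      exact smul_mem _ _ (subset_span ⟨0, mem_Iic.2 le_rfl, rfl⟩)
    | succ j =>
      have hmem : f (w j) ∈ p ⊔ span K (w '' Iic j) := by
        rw [← comap_map_mkQ, map_span, mem_comap, ← image_comp, hw]
        simpa [← hw] using hc j
      suffices p ⊔ span K (w '' Iic j) ≤ span K (Fin.cons v w '' Iic j.succ) by
        simpa only [Fin.cons_succ] using this hmem
      refine sup_le ?_ (span_mono ?_)
      · exact (span_singleton_le_iff_mem _ _).2 (subset_span ⟨0, Fin.zero_le _, rfl⟩)
      · rintro _ ⟨i, hi, rfl⟩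
        exact ⟨i.succ, Fin.succ_le_succ_iff.2 hi, rfl⟩

theorem Matrix.exists_units_conj_isUpperTriangular {K : Type*} [Field K] [IsAlgClosed K] {n : ℕ}
    (A : Matrix (Fin n) (Fin n) K) :
    ∃ P : (Matrix (Fin n) (Fin n) K)ˣ, (P.val⁻¹ * A * P.val).IsUpperTriangular := by
  obtain ⟨b, hb⟩ :=
    Module.End.exists_basis_apply_mem_span_Iic (finrank_fin_fun K) (Matrix.toLin' A)
  let e := Pi.basisFun K (Fin n)
  refine ⟨⟨e.toMatrix b, b.toMatrix e, e.toMatrix_mul_toMatrix_flip b,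
    b.toMatrix_mul_toMatrix_flip e⟩, fun i j hji => ?_⟩
  have hconj : b.toMatrix e * A * e.toMatrix b = LinearMap.toMatrix b b (Matrix.toLin' A) := by
    rw [← basis_toMatrix_mul_linearMap_toMatrix_mul_basis_toMatrix (b := b) (c := b) (b' := e)
      (c' := e), LinearMap.toMatrix_eq_toMatrix', LinearMap.toMatrix'_toLin']
  rw [← Matrix.coe_units_inv]
  change (b.toMatrix e * A * e.toMatrix b) i j = 0
  rw [hconj, LinearMap.toMatrix_apply]
  exact Finsupp.notMem_support_iff.1 fun hi => not_le.2 hji (b.mem_span_image.1 (hb j) hi)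

theorem Polynomial.rootMultiplicity_prod_X_sub_C {R ι : Type*} [CommRing R] [IsDomain R]
    [DecidableEq R] [Fintype ι] (t : ι → R) (a : R) :
    (∏ i, (X - C (t i))).rootMultiplicity a = #{i | t i = a} := by
  have : ∏ i, (X - C (t i)) = ((Finset.univ.val.map t).map fun b => X - C b).prod := by
    rw [Multiset.map_map]; rfl
  rw [← count_roots, this, roots_multiset_prod_X_sub_C, Multiset.count_map]
  simp only [eq_comm]
  rfl

theorem Polynomial.rootMultiplicity_prod_X_sub_C_eq_one_iff {R ι : Type*} [CommRing R]
    [IsDomain R] [Fintype ι] (t : ι → R) (a : R) :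
    (∏ i, (X - C (t i))).rootMultiplicity a = 1 ↔ ∃ i₀, ∀ i, t i = a ↔ i = i₀ := by
  classical
  simp [rootMultiplicity_prod_X_sub_C, Finset.card_eq_one, Finset.ext_iff]

theorem finite_setOf_not_injective_add_smul {K ι : Type*} [Field K] [Finite ι] (s w : ι → K)
    (hw : Function.Injective w) : {τ : K | ¬Function.Injective (s + τ • w)}.Finite := by
  refine (Set.finite_range fun p : ι × ι => (s p.2 - s p.1) / (w p.1 - w p.2)).subset ?_
  intro τ hτ
  simp only [mem_ofPred_eq, Function.Injective, not_forall] at hτ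
  obtain ⟨i, j, hij, hne⟩ := hτ
  have : w i - w j ≠ 0 := sub_ne_zero.2 (hw.ne hne)
  refine ⟨(i, j), ?_⟩
  simp only [Pi.add_apply, Pi.smul_apply, smul_eq_mul] at hij
  field_simp
  linear_combination -hij

theorem exists_mem_Ioo_injective_add_smul {K ι : Type*} [Field K] [LinearOrder K]
    [IsStrictOrderedRing K] [Finite ι] (s w : ι → K) (hw : Function.Injective w) {r : K}
    (hr : 0 < r) : ∃ τ ∈ Ioo 0 r, Function.Injective (s + τ • w) := by
  obtain ⟨τ, hτ, hinj⟩ := (Ioo_infinite hr).exists_notMem_finite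
    (finite_setOf_not_injective_add_smul s w hw)
  exact ⟨τ, hτ, not_not.1 hinj⟩

theorem Matrix.charpoly_add_units_conj_diagonal {R n : Type*} [CommRing R] [Fintype n]
    [DecidableEq n] [LinearOrder n] {A : Matrix n n R} {P : (Matrix n n R)ˣ}
    (hA : (P.val⁻¹ * A * P.val).IsUpperTriangular) (c : n → R) :
    (A + P.val * diagonal c * P.val⁻¹).charpoly =
      ∏ i, (X - C ((P.val⁻¹ * A * P.val) i i + c i)) := by
  have hconj : P.val⁻¹ * (A + P.val * diagonal c * P.val⁻¹) * P.val =
      P.val⁻¹ * A * P.val + diagonal c := by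
    simp [Matrix.mul_add, Matrix.add_mul, ← Matrix.mul_assoc]
  rw [← charpoly_units_conj' P, hconj,
    charpoly_of_isUpperTriangular _ (hA.add (blockTriangular_diagonal c))]
  simp

theorem Matrix.mem_spectrum_iff_of_charpoly_eq_prod {K n : Type*} [Field K] [Fintype n]
    [DecidableEq n] {M : Matrix n n K} {t : n → K} (h : M.charpoly = ∏ i, (X - C (t i)))
    (μ : K) : μ ∈ spectrum K M ↔ μ ∈ range t := by
  rw [mem_spectrum_iff_isRoot_charpoly, h, isRoot_prod]
  simp [sub_eq_zero, eq_comm]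

theorem Matrix.exists_basis_eigenvectors_of_charpoly_eq_prod {K n : Type*} [Field K]
    [Fintype n] [DecidableEq n] {M : Matrix n n K} {t : n → K}
    (h : M.charpoly = ∏ i, (X - C (t i))) (ht : Function.Injective t) :
    ∃ b : Module.Basis n K (n → K), ∀ i, M.mulVecLin (b i) = t i • b i := by
  have hev (i : n) : Module.End.HasEigenvalue M.mulVecLin (t i) := by
    rw [Module.End.hasEigenvalue_iff_isRoot_charpoly, Matrix.charpoly_mulVecLin, h, isRoot_prod]
    exact ⟨i, Finset.mem_univ i, root_X_sub_C.2 rfl⟩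
  choose v hv using fun i => (hev i).exists_hasEigenvector
  refine ⟨basisOfLinearIndependentOfCardEqFinrank' v
    (Module.End.eigenvectors_linearIndependent' M.mulVecLin t ht v hv) (by simp), fun i => ?_⟩
  rw [coe_basisOfLinearIndependentOfCardEqFinrank']
  exact (hv i).apply_eq_smul

theorem Matrix.exists_near_charpoly_eq_prod_injective_im_le {d : ℕ}
    {Λ : Matrix (Fin d) (Fin d) ℂ} {P : (Matrix (Fin d) (Fin d) ℂ)ˣ}
    (hT : (P.val⁻¹ * Λ * P.val).IsUpperTriangular) (i₀ : Fin d) {η : ℝ} (hη : 0 < η) :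
    ∃ Λ' : Matrix (Fin d) (Fin d) ℂ, ‖Matrix.toEuclideanCLM (𝕜 := ℂ) (Λ - Λ')‖ ≤ η ∧
      ∃ t' : Fin d → ℂ, Function.Injective t' ∧ Λ'.charpoly = ∏ i, (X - C (t' i)) ∧
        t' i₀ = (P.val⁻¹ * Λ * P.val) i₀ i₀ ∧
        ∀ i, ((P.val⁻¹ * Λ * P.val) i i).im ≤ (t' i).im := by
  set t : Fin d → ℂ := fun i => (P.val⁻¹ * Λ * P.val) i i
  let w : Fin d → ℝ := fun i => if i = i₀ then 0 else i + 1
  have hw : Function.Injective w := by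
    intro i j hij
    simp only [w] at hij
    split_ifs at hij with hi hj hj
    · exact hi.trans hj.symm
    · exact absurd hij.symm (by positivity)
    · exact absurd hij (by positivity)
    · exact Fin.ext (by exact_mod_cast add_right_cancel hij)
  let E := P.val * Matrix.diagonal (fun i => (w i : ℂ) * Complex.I) * P.val⁻¹
  obtain ⟨τ, ⟨hτ, hτη⟩, hinj⟩ := exists_mem_Ioo_injective_add_smul (fun i => (t i).im) w hw
    (show 0 < η / (‖Matrix.toEuclideanCLM (𝕜 := ℂ) E‖ + 1) by positivity)
  refine ⟨Λ + (τ : ℂ) • E, ?_, fun i => t i + (τ * w i : ℝ) * Complex.I,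
    .of_comp (f := Complex.im) (by convert hinj using 1; ext i; simp), ?_, by simp [w, t], ?_⟩
  · rw [sub_add_cancel_left, map_neg, norm_neg, map_smul, norm_smul, Complex.norm_real,
      Real.norm_of_nonneg hτ.le]
    rw [lt_div_iff₀ (by positivity)] at hτη
    nlinarith [norm_nonneg (Matrix.toEuclideanCLM (𝕜 := ℂ) E)]
  · have hE : (τ : ℂ) • E =
        P.val * Matrix.diagonal ((τ : ℂ) • fun i => (w i : ℂ) * Complex.I) * P.val⁻¹ := by
      rw [Matrix.diagonal_smul, Matrix.mul_smul, Matrix.smul_mul]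
    rw [hE, Matrix.charpoly_add_units_conj_diagonal hT]
    simp [t, mul_assoc]
  · intro i
    have hw_i : 0 ≤ w i := by simp only [w]; split_ifs <;> positivity
    simpa [t] using mul_nonneg hτ.le hw_i

theorem diagonalizable_approximation_spectral_gap_general
    (d : ℕ) (Λ : Matrix (Fin d) (Fin d) ℂ)
    (lam : ℂ)
    (hmult : (Matrix.charpoly Λ).rootMultiplicity lam = 1)
    (δ : ℝ)
    (hgap : ∀ μ ∈ spectrum ℂ Λ, μ ≠ lam → lam.im + δ ≤ μ.im)
    (η : ℝ) (hη : 0 < η) :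
    ∃ Λ' : Matrix (Fin d) (Fin d) ℂ,
      ‖Matrix.toEuclideanCLM (𝕜 := ℂ) (Λ - Λ')‖ ≤ η ∧
      (∃ v : Module.Basis (Fin d) ℂ (Fin d → ℂ), ∀ i, ∃ μ : ℂ, Λ'.mulVecLin (v i) = μ • v i) ∧
      lam ∈ spectrum ℂ Λ' ∧
      (Matrix.charpoly Λ').rootMultiplicity lam = 1 ∧
      ∀ μ ∈ spectrum ℂ Λ', μ ≠ lam → lam.im + δ ≤ μ.im := by
  obtain ⟨P, hT⟩ := Λ.exists_units_conj_isUpperTriangular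
  set t : Fin d → ℂ := fun i => (P.val⁻¹ * Λ * P.val) i i
  have hΛ : Λ.charpoly = ∏ i, (X - C (t i)) := by
    simpa using Matrix.charpoly_add_units_conj_diagonal hT 0
  obtain ⟨i₀, hi₀⟩ := (rootMultiplicity_prod_X_sub_C_eq_one_iff t lam).1 (hΛ ▸ hmult)
  obtain ⟨Λ', hnorm, t', ht', hΛ', ht'₀, him⟩ :=
    Matrix.exists_near_charpoly_eq_prod_injective_im_le hT i₀ hη
  replace ht'₀ : t' i₀ = lam := ht'₀.trans ((hi₀ i₀).2 rfl)
  have hspec := Matrix.mem_spectrum_iff_of_charpoly_eq_prod hΛ'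
  refine ⟨Λ', hnorm, ?_, (hspec lam).2 ⟨i₀, ht'₀⟩, ?_, ?_⟩
  · obtain ⟨b, hb⟩ := Matrix.exists_basis_eigenvectors_of_charpoly_eq_prod hΛ' ht'
    exact ⟨b, fun i => ⟨t' i, hb i⟩⟩
  · rw [hΛ', rootMultiplicity_prod_X_sub_C_eq_one_iff]
    exact ⟨i₀, fun i => ⟨fun h => ht' (h.trans ht'₀.symm), fun h => h ▸ ht'₀⟩⟩
  · intro μ hμ hne
    obtain ⟨i, rfl⟩ := (hspec μ).1 hμ
    have hi : i ≠ i₀ := by rintro rfl; exact hne ht'₀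
    exact (hgap (t i) ((Matrix.mem_spectrum_iff_of_charpoly_eq_prod hΛ _).2 ⟨i, rfl⟩)
      fun h => hi ((hi₀ i).1 h)).trans (him i)

/-- **Diagonalizable approximation of the level shift operator.**
Let `Λ` be a `d × d` complex matrix, `lam` an eigenvalue of `Λ` of algebraic
multiplicity one, and `δ > 0` such that every other eigenvalue `μ ≠ lam` satisfies
`Im μ ≥ Im lam + δ`. Then for every `η > 0` there is a `d × d` complex matrix `Λ'`
with `‖Λ - Λ'‖ ≤ η` (operator norm w.r.t. the Euclidean norm on `ℂ^d`), such that
`Λ'` is diagonalizable, `lam` is an eigenvalue of `Λ'` of algebraic multiplicity one,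
and every eigenvalue `μ' ≠ lam` of `Λ'` satisfies `Im μ' ≥ Im lam + δ`. -/
theorem diagonalizable_approximation_spectral_gap
    (d : ℕ) (hd : 1 ≤ d) (Λ : Matrix (Fin d) (Fin d) ℂ)
    (lam : ℂ) (hlam : lam ∈ spectrum ℂ Λ)
    (hmult : (Matrix.charpoly Λ).rootMultiplicity lam = 1)
    (δ : ℝ) (hδ : 0 < δ)
    (hgap : ∀ μ ∈ spectrum ℂ Λ, μ ≠ lam → lam.im + δ ≤ μ.im)
    (η : ℝ) (hη : 0 < η) :
    ∃ Λ' : Matrix (Fin d) (Fin d) ℂ,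
      ‖Matrix.toEuclideanCLM (𝕜 := ℂ) (Λ - Λ')‖ ≤ η ∧
      (∃ v : Module.Basis (Fin d) ℂ (Fin d → ℂ), ∀ i, ∃ μ : ℂ, Λ'.mulVecLin (v i) = μ • v i) ∧
      lam ∈ spectrum ℂ Λ' ∧
      (Matrix.charpoly Λ').rootMultiplicity lam = 1 ∧
      ∀ μ ∈ spectrum ℂ Λ', μ ≠ lam → lam.im + δ ≤ μ.im :=
  diagonalizable_approximation_spectral_gap_general d Λ lam hmult δ hgap η hη
end
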